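/- Let f : ℝ^{m×n} → ℝ be differentiable and L_*-spectral-norm Lipschitz smooth (satisfying f(Y) ≤ f(X) + ⟨∇f(X), Y−X⟩ + (L_*/2)‖Y−X‖_op² for all X, Y). For the Muon update W' = W − η·UV^T with UV^T from the thin SVD of ∇f(W), one has f(W') ≤ f(W) − η‖∇f(W)‖_* + (L_* η²)/2. -/

import Mathlib

/-!
Take `Y = W - η UVᵀ` in the quadratic upper bound. The linear term is
`⟨UΣVᵀ, UVᵀ⟩ = tr Σ`, which is the nuclear norm because `√((UΣVᵀ)ᵀ(UΣVᵀ)) = VΣVᵀ` has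
trace `tr Σ`. The quadratic term is at most `L_* η² / 2` because `(UVᵀ)ᵀ(UVᵀ) = VVᵀ` is an
orthogonal projection, hence `≤ 1` in the Loewner order, so every singular value of `UVᵀ` is
at most `1`.
-/

open scoped BigOperators
open Matrix

/-- Nuclear norm of a real matrix: the sum of its singular values. -/
noncomputable def nucNorm {m n : ℕ} (A : Matrix (Fin m) (Fin n) ℝ) : ℝ :=
  ∑ j, Real.sqrt ((Matrix.isHermitian_conjTranspose_mul_self A).eigenvalues j)

/-- Spectral (operator) norm of a real matrix: the largest singular value. -/
noncomputable def specNorm {m n : ℕ} (A : Matrix (Fin m) (Fin n) ℝ) : ℝ :=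
  Real.sqrt (⨆ j, (Matrix.isHermitian_conjTranspose_mul_self A).eigenvalues j)

open scoped MatrixOrder

namespace Matrix

section

variable {n : Type*} [Fintype n] [DecidableEq n]

lemma PosSemidef.trace_sqrt {A : Matrix n n ℝ} (hA : A.PosSemidef) :
    (CFC.sqrt A).trace = ∑ i, √(hA.1.eigenvalues i) := by
  rw [CFC.sqrt_eq_cfc, cfc_nnreal_eq_real _ A hA.nonneg, hA.1.cfc_eq, IsHermitian.cfc,
    Unitary.conjStarAlgAut_apply, trace_mul_cycle, Unitary.coe_star_mul_self, one_mul,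
    trace_diagonal]
  simp [Real.coe_sqrt, hA.eigenvalues_nonneg]

lemma IsHermitian.eigenvalues_le_of_le_smul_one {A : Matrix n n ℝ} (hA : A.IsHermitian) {c : ℝ}
    (h : A ≤ c • 1) (i : n) : hA.eigenvalues i ≤ c := by
  rw [← Algebra.algebraMap_eq_smul_one] at h
  exact (le_algebraMap_iff_spectrum_le hA).1 h _ (hA.eigenvalues_mem_spectrum_real i)

end

variable {m n k : Type*} [Fintype m] [Fintype n] [Fintype k] [DecidableEq k]

lemma isStarProjection_mul_transpose {V : Matrix n k ℝ} (hV : Vᵀ * V = 1) :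
    IsStarProjection (V * Vᵀ) where
  isIdempotentElem := by
    rw [IsIdempotentElem, Matrix.mul_assoc, ← Matrix.mul_assoc Vᵀ, hV, Matrix.one_mul]
  isSelfAdjoint := by
    simp [IsSelfAdjoint, star_eq_conjTranspose, conjTranspose_eq_transpose_of_trivial]

lemma trace_mul_diagonal_mul_transpose {V : Matrix n k ℝ} (hV : Vᵀ * V = 1) (σ : k → ℝ) :
    (V * diagonal σ * Vᵀ).trace = ∑ i, σ i := by
  rw [trace_mul_cycle, hV, Matrix.one_mul, trace_diagonal]

variable {U : Matrix m k ℝ} {V : Matrix n k ℝ} {σ : k → ℝ}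

lemma sqrt_transpose_mul_self_svd [DecidableEq n] (hU : Uᵀ * U = 1) (hV : Vᵀ * V = 1)
    (hσ : 0 ≤ σ) :
    CFC.sqrt ((U * diagonal σ * Vᵀ)ᵀ * (U * diagonal σ * Vᵀ)) = V * diagonal σ * Vᵀ := by
  refine CFC.sqrt_unique ?_ ?_
  · simp only [transpose_mul, transpose_transpose, diagonal_transpose, Matrix.mul_assoc]
    rw [← Matrix.mul_assoc Uᵀ U, hU, Matrix.one_mul, ← Matrix.mul_assoc Vᵀ V, hV, Matrix.one_mul]
  · simpa [conjTranspose_eq_transpose_of_trivial] using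
      ((posSemidef_diagonal_iff.2 hσ).mul_mul_conjTranspose_same V).nonneg

lemma sum_svd_mul_polar_apply (hU : Uᵀ * U = 1) (hV : Vᵀ * V = 1) :
    ∑ i, ∑ j, (U * diagonal σ * Vᵀ) i j * (U * Vᵀ) i j = ∑ i, σ i := by
  simp only [← hadamard_apply, sum_hadamard_eq]
  rw [transpose_mul, transpose_transpose, Matrix.mul_assoc (U * diagonal σ),
    ← Matrix.mul_assoc Vᵀ, hV, Matrix.one_mul, trace_mul_diagonal_mul_transpose hU]

end Matrix

section

variable {m n : ℕ}

lemma nucNorm_eq_trace_sqrt (A : Matrix (Fin m) (Fin n) ℝ) :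
    nucNorm A = (CFC.sqrt (Aᵀ * A)).trace := by
  rw [← conjTranspose_eq_transpose_of_trivial, (posSemidef_conjTranspose_mul_self A).trace_sqrt,
    nucNorm]

lemma nucNorm_svd {k : Type*} [Fintype k] [DecidableEq k] {U : Matrix (Fin m) k ℝ}
    {V : Matrix (Fin n) k ℝ} {σ : k → ℝ} (hU : Uᵀ * U = 1) (hV : Vᵀ * V = 1) (hσ : 0 ≤ σ) :
    nucNorm (U * diagonal σ * Vᵀ) = ∑ i, σ i := by
  rw [nucNorm_eq_trace_sqrt, sqrt_transpose_mul_self_svd hU hV hσ,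
    trace_mul_diagonal_mul_transpose hV]

lemma specNorm_sq_le_of_transpose_mul_self_le {A : Matrix (Fin m) (Fin n) ℝ} {c : ℝ} (hc : 0 ≤ c)
    (h : Aᵀ * A ≤ c • 1) : specNorm A ^ 2 ≤ c := by
  rw [← conjTranspose_eq_transpose_of_trivial] at h
  rw [specNorm,
    Real.sq_sqrt (Real.iSup_nonneg (posSemidef_conjTranspose_mul_self A).eigenvalues_nonneg)]
  exact Real.iSup_le ((isHermitian_conjTranspose_mul_self A).eigenvalues_le_of_le_smul_one h) hc

lemma specNorm_smul_mul_transpose_sq_le {k : Type*} [Fintype k] [DecidableEq k]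
    {U : Matrix (Fin m) k ℝ} {V : Matrix (Fin n) k ℝ} (hU : Uᵀ * U = 1) (hV : Vᵀ * V = 1) (c : ℝ) :
    specNorm (c • (U * Vᵀ)) ^ 2 ≤ c ^ 2 := by
  refine specNorm_sq_le_of_transpose_mul_self_le (sq_nonneg c) ?_
  have hMtM : (U * Vᵀ)ᵀ * (U * Vᵀ) = V * Vᵀ := by
    rw [transpose_mul, transpose_transpose, Matrix.mul_assoc, ← Matrix.mul_assoc Uᵀ, hU,
      Matrix.one_mul]
  rw [transpose_smul, Matrix.smul_mul, Matrix.mul_smul, smul_smul, hMtM, ← sq]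
  exact smul_le_smul_of_nonneg_left (isStarProjection_mul_transpose hV).le_one (sq_nonneg c)

end

theorem muon_descent_spectral_smooth_general
    {m n k : ℕ} (f : Matrix (Fin m) (Fin n) ℝ → ℝ)
    (gradf : Matrix (Fin m) (Fin n) ℝ → Matrix (Fin m) (Fin n) ℝ)
    (Lstar : ℝ) (hL : 0 ≤ Lstar)
    (hquad : ∀ X Y : Matrix (Fin m) (Fin n) ℝ,
      f Y ≤ f X + (∑ i, ∑ j, gradf X i j * (Y - X) i j)
        + Lstar / 2 * (specNorm (Y - X)) ^ 2)
    (η : ℝ)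
    (W : Matrix (Fin m) (Fin n) ℝ)
    (U : Matrix (Fin m) (Fin k) ℝ) (V : Matrix (Fin n) (Fin k) ℝ)
    (σ : Fin k → ℝ) (hσ : ∀ i, 0 < σ i)
    (hU : Uᵀ * U = 1) (hV : Vᵀ * V = 1)
    (hSVD : gradf W = U * Matrix.diagonal σ * Vᵀ) :
    f (W - η • (U * Vᵀ)) ≤
      f W - η * nucNorm (gradf W) + Lstar * η ^ 2 / 2 := by
  have hstep := hquad W (W - η • (U * Vᵀ))
  rw [show W - η • (U * Vᵀ) - W = (-η) • (U * Vᵀ) by rw [neg_smul]; abel] at hstep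
  have hinner : ∑ i, ∑ j, gradf W i j * ((-η) • (U * Vᵀ)) i j = -η * ∑ i, σ i := by
    simp only [Matrix.smul_apply, smul_eq_mul, mul_left_comm _ (-η), ← Finset.mul_sum, hSVD,
      sum_svd_mul_polar_apply hU hV]
  have hspec := specNorm_smul_mul_transpose_sq_le hU hV (-η)
  rw [neg_sq] at hspec
  rw [hSVD, nucNorm_svd hU hV fun i => (hσ i).le]
  linarith [mul_le_mul_of_nonneg_left hspec hL]

/-- Descent lemma for the Muon update under `L_*`-spectral-norm Lipschitz
smoothness (expressed via the quadratic upper bound). -/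
theorem muon_descent_spectral_smooth
    {m n k : ℕ} (f : Matrix (Fin m) (Fin n) ℝ → ℝ)
    (gradf : Matrix (Fin m) (Fin n) ℝ → Matrix (Fin m) (Fin n) ℝ)
    (hgrad : ∀ W V : Matrix (Fin m) (Fin n) ℝ,
      HasDerivAt (fun t : ℝ => f (W + t • V)) (∑ i, ∑ j, gradf W i j * V i j) 0)
    (Lstar : ℝ) (hL : 0 ≤ Lstar)
    (hquad : ∀ X Y : Matrix (Fin m) (Fin n) ℝ,
      f Y ≤ f X + (∑ i, ∑ j, gradf X i j * (Y - X) i j)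
        + Lstar / 2 * (specNorm (Y - X)) ^ 2)
    (η : ℝ) (hη : 0 ≤ η)
    (W : Matrix (Fin m) (Fin n) ℝ)
    (U : Matrix (Fin m) (Fin k) ℝ) (V : Matrix (Fin n) (Fin k) ℝ)
    (σ : Fin k → ℝ) (hσ : ∀ i, 0 < σ i)
    (hU : Uᵀ * U = 1) (hV : Vᵀ * V = 1)
    (hSVD : gradf W = U * Matrix.diagonal σ * Vᵀ) :
    f (W - η • (U * Vᵀ)) ≤
      f W - η * nucNorm (gradf W) + Lstar * η ^ 2 / 2 :=
  muon_descent_spectral_smooth_general f gradf Lstar hL hquad η W U V σ hσ hU hV hSVD
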